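/- Minkowski space-time contains no locally naked singularities (the globally hyperbolic case of Penrose's Theorem on strong cosmic censorship, instantiated for Minkowski space): for every future-directed causal curve γ : [0,∞) → 𝕄 parametrized by Euclidean arc length (hence future-endless) and every point x ∈ 𝕄, the inclusion I⁻(γ) ⊆ I⁻(x) fails. -/

import Mathlib

/-!
Since `‖x‖ ≤ t` on the causal cone, a causal displacement `(t, x)` has Euclidean length at
most `√2 t`. Summing over partitions, the Euclidean arc length of a causal curve is at most
`√2` times the increase of its time coordinate, so a curve parametrized by arc length on
`[0, ∞)` reaches arbitrarily late times. But every point of `I⁻(x)` lies strictly earlier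
than `x`, while `I⁻(γ s)` contains points only one unit of time earlier than `γ s`.
-/

noncomputable section

open Set Filter

/-- Minkowski space-time `𝕄 = ℝ × EuclideanSpace ℝ (Fin 3)`, equipped with the Euclidean
norm `‖(t,x)‖ = √(t² + ‖x‖²)` (i.e. the `L²` product norm). -/
abbrev Mink : Type := WithLp 2 (ℝ × EuclideanSpace ℝ (Fin 3))

/-- The future causal cone `C = {(t,x) : ‖x‖ ≤ t}`. -/
def causalCone : Set Mink := {p | ‖p.ofLp.2‖ ≤ p.ofLp.1}

/-- The future chronological cone `C° = {(t,x) : ‖x‖ < t}` (the interior of `C`). -/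
def chronCone : Set Mink := {p | ‖p.ofLp.2‖ < p.ofLp.1}

/-- `causalLE x y` (written `x ≤ y`): `x` causally precedes `y`, i.e. `y - x ∈ C`. -/
def causalLE (x y : Mink) : Prop := y - x ∈ causalCone

/-- `chronLT x y` (written `x ≪ y`): `x` chronologically precedes `y`, i.e. `y - x ∈ C°`. -/
def chronLT (x y : Mink) : Prop := y - x ∈ chronCone

/-- The chronological past `I⁻(x) = {z : z ≪ x}`. -/
def Iminus (x : Mink) : Set Mink := {z | chronLT z x}

/-- The causal past `J⁻(x) = {z : z ≤ x}`. -/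
def Jminus (x : Mink) : Set Mink := {z | causalLE z x}

/-- The causal future `J⁺(x) = {z : x ≤ z}`. -/
def Jplus (x : Mink) : Set Mink := {z | causalLE x z}

/-- A future-directed causal curve on an interval `I ⊆ ℝ`: a continuous map `c : I → 𝕄`
such that `c t - c s ∈ C` and `c s ≠ c t` whenever `s < t` in `I`. -/
def IsFDCausalOn (c : ℝ → Mink) (I : Set ℝ) : Prop :=
  ContinuousOn c I ∧ ∀ s ∈ I, ∀ t ∈ I, s < t → c t - c s ∈ causalCone ∧ c s ≠ c t

lemma norm_le_sqrt_two_mul_fst_of_mem_causalCone {p : Mink} (hp : p ∈ causalCone) :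
    ‖p‖ ≤ √2 * p.ofLp.1 := by
  have hx : ‖p.ofLp.2‖ ≤ p.ofLp.1 := hp
  have ht : 0 ≤ p.ofLp.1 := (norm_nonneg _).trans hx
  calc ‖p‖ = √(‖p.ofLp.1‖ ^ 2 + ‖p.ofLp.2‖ ^ 2) := WithLp.prod_norm_eq_of_L2 p
    _ ≤ √(2 * p.ofLp.1 ^ 2) := by
      gcongr
      rw [Real.norm_eq_abs, sq_abs]
      nlinarith [pow_le_pow_left₀ (norm_nonneg _) hx 2]
    _ = √2 * p.ofLp.1 := by rw [Real.sqrt_mul zero_le_two, Real.sqrt_sq ht]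

lemma fst_lt_of_mem_Iminus {x z : Mink} (hz : z ∈ Iminus x) : z.ofLp.1 < x.ofLp.1 := by
  have hz : ‖(x - z).ofLp.2‖ < (x - z).ofLp.1 := hz
  have : 0 < x.ofLp.1 - z.ofLp.1 := (norm_nonneg _).trans_lt hz
  linarith

lemma exists_mem_Iminus_fst_eq (p : Mink) : ∃ z ∈ Iminus p, z.ofLp.1 = p.ofLp.1 - 1 := by
  refine ⟨p - WithLp.toLp 2 (1, 0), ?_, rfl⟩
  simp [Iminus, chronLT, chronCone]

theorem eVariationOn_le_mul_of_edist_le {α E F : Type*} [LinearOrder α] [PseudoEMetricSpace E]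
    [PseudoEMetricSpace F] {f : α → E} {g : α → F} {s : Set α} {C : ENNReal}
    (h : ∀ x ∈ s, ∀ y ∈ s, x ≤ y → edist (f y) (f x) ≤ C * edist (g y) (g x)) :
    eVariationOn f s ≤ C * eVariationOn g s := by
  refine iSup_le fun ⟨n, u, hu, us⟩ => ?_
  calc ∑ i ∈ Finset.range n, edist (f (u (i + 1))) (f (u i))
      ≤ ∑ i ∈ Finset.range n, C * edist (g (u (i + 1))) (g (u i)) :=
        Finset.sum_le_sum fun i _ => h _ (us i) _ (us (i + 1)) (hu i.le_succ)
    _ = C * ∑ i ∈ Finset.range n, edist (g (u (i + 1))) (g (u i)) := by rw [Finset.mul_sum]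
    _ ≤ C * eVariationOn g s := by grw [eVariationOn.sum_le hu us]

namespace IsFDCausalOn

variable {c : ℝ → Mink} {I : Set ℝ}

lemma monotoneOn_fst (hc : IsFDCausalOn c I) : MonotoneOn (fun s => (c s).ofLp.1) I := by
  intro a ha b hb hab
  rcases hab.eq_or_lt with rfl | hlt
  · exact le_rfl
  · have : 0 ≤ (c b - c a).ofLp.1 := (norm_nonneg _).trans (hc.2 a ha b hb hlt).1
    simpa using this

lemma edist_le_sqrt_two_mul_edist_fst (hc : IsFDCausalOn c I) {a b : ℝ} (ha : a ∈ I)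
    (hb : b ∈ I) (hab : a ≤ b) :
    edist (c b) (c a) ≤ ENNReal.ofReal √2 * edist (c b).ofLp.1 (c a).ofLp.1 := by
  rcases hab.eq_or_lt with rfl | hlt
  · simp
  · rw [edist_dist, edist_dist, dist_eq_norm, Real.dist_eq,
      abs_of_nonneg (sub_nonneg.2 (hc.monotoneOn_fst ha hb hab)),
      ← ENNReal.ofReal_mul (Real.sqrt_nonneg 2)]
    exact ENNReal.ofReal_le_ofReal
      (norm_le_sqrt_two_mul_fst_of_mem_causalCone (hc.2 a ha b hb hlt).1)

theorem eVariationOn_inter_Icc_le (hc : IsFDCausalOn c I) {a b : ℝ} (ha : a ∈ I)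
    (hb : b ∈ I) :
    eVariationOn c (I ∩ Icc a b) ≤ ENNReal.ofReal (√2 * ((c b).ofLp.1 - (c a).ofLp.1)) := by
  calc eVariationOn c (I ∩ Icc a b)
      ≤ ENNReal.ofReal √2 * eVariationOn (fun s => (c s).ofLp.1) (I ∩ Icc a b) :=
        eVariationOn_le_mul_of_edist_le fun x hx y hy hxy =>
          hc.edist_le_sqrt_two_mul_edist_fst hx.1 hy.1 hxy
    _ = ENNReal.ofReal (√2 * ((c b).ofLp.1 - (c a).ofLp.1)) := by
      rw [hc.monotoneOn_fst.eVariationOn_eq ha hb, ← ENNReal.ofReal_mul (Real.sqrt_nonneg 2)]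

theorem tendsto_fst_atTop_of_arclength (hc : IsFDCausalOn c (Ici 0))
    (harc : ∀ s : ℝ, 0 ≤ s → eVariationOn c (Icc 0 s) = ENNReal.ofReal s) :
    Tendsto (fun s => (c s).ofLp.1) atTop atTop := by
  have hlower : ∀ s ≥ 0, (c 0).ofLp.1 + s / √2 ≤ (c s).ofLp.1 := fun s hs => by
    have hvar := hc.eVariationOn_inter_Icc_le self_mem_Ici (mem_Ici.2 hs)
    have hrise := sub_nonneg.2 (hc.monotoneOn_fst self_mem_Ici hs hs)
    rw [inter_eq_right.2 Icc_subset_Ici_self, harc s hs,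
      ENNReal.ofReal_le_ofReal_iff (mul_nonneg (Real.sqrt_nonneg 2) hrise)] at hvar
    have : s / √2 ≤ (c s).ofLp.1 - (c 0).ofLp.1 := (div_le_iff₀' (by positivity)).2 hvar
    linarith
  exact tendsto_atTop_mono' _ (eventually_ge_atTop 0 |>.mono hlower)
    (tendsto_atTop_add_const_left _ _ (tendsto_id.atTop_div_const (by positivity)))

end IsFDCausalOn

/-- Minkowski space-time contains no locally naked singularities: for every
future-directed causal curve `γ : [0,∞) → 𝕄` parametrized by Euclidean arc length
(hence future-endless) and every point `x`, the inclusion `I⁻(γ) ⊆ I⁻(x)` fails. -/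
theorem minkowski_no_locally_naked_singularities (γ : ℝ → Mink)
    (hγ : IsFDCausalOn γ (Set.Ici 0))
    (harc : ∀ s : ℝ, 0 ≤ s → eVariationOn γ (Set.Icc 0 s) = ENNReal.ofReal s) :
    ∀ x : Mink, ¬ (⋃ s ∈ Set.Ici (0 : ℝ), Iminus (γ s)) ⊆ Iminus x := by
  intro x hsub
  obtain ⟨s, hs_late, hs0⟩ := ((hγ.tendsto_fst_atTop_of_arclength harc).eventually_ge_atTop
    (x.ofLp.1 + 1) |>.and (eventually_ge_atTop 0)).exists
  obtain ⟨z, hz, hz_fst⟩ := exists_mem_Iminus_fst_eq (γ s)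
  have := fst_lt_of_mem_Iminus (hsub (mem_biUnion (mem_Ici.2 hs0) hz))
  linarith
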